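/- arXiv:1412.7331 — 2 statements merged into one kernel-verified Lean document; each statement's English description precedes it below -/
import Mathlib

section
/- Let (a_i) be a bounded sequence of reals. If lim_{n→∞} (1/n)∑_{i=1}^n a_i exists, then lim_{λ→0+} λ∑_{i=1}^∞ (1-λ)^{i-1} a_i exists and the two limits are equal. -/
/-!
Write `s n = a 1 + ⋯ + a n = n σ n` with `σ` the Cesàro means. Abel summation turns the Abel mean
`λ ∑ (1 - λ)^i a (i+1)` into `∑ λ² (i + 1) (1 - λ)^i σ (i+1)`, a weighted average of the Cesàro
means whose weights are nonnegative, sum to `1`, and each tend to `0` as `λ → 0⁺`. Such an average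
preserves limits (Silverman–Toeplitz): the first `N` means get vanishing total weight, and all later
ones are `ε`-close to the limit.
-/

open Filter Topology Finset

section Toeplitz

variable {E : Type*} [NormedAddCommGroup E] [NormedSpace ℝ E]

lemma norm_tsum_smul_le_sum_range_add {w : ℕ → ℝ} (hw_nonneg : ∀ i, 0 ≤ w i)
    (hw_sum : HasSum w 1) {g : ℕ → E} {M : ℝ} (hg : ∀ i, ‖g i‖ ≤ M) {N : ℕ} {ε : ℝ}
    (hg_tail : ∀ i, N ≤ i → ‖g i‖ ≤ ε) :
    ‖∑' i, w i • g i‖ ≤ ∑ i ∈ range N, w i * ‖g i‖ + ε := by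
  have hwg : Summable fun i => w i * ‖g i‖ :=
    (hw_sum.summable.mul_right M).of_nonneg_of_le
      (fun i => mul_nonneg (hw_nonneg i) (norm_nonneg _))
      fun i => mul_le_mul_of_nonneg_left (hg i) (hw_nonneg i)
  have hw_tail : ∑' i, w (i + N) ≤ 1 := by
    rw [← hw_sum.tsum_eq, ← hw_sum.summable.sum_add_tsum_nat_add N]
    exact le_add_of_nonneg_left (sum_nonneg fun i _ => hw_nonneg i)
  have hε : 0 ≤ ε := (norm_nonneg _).trans (hg_tail N le_rfl)
  have tail : ∑' i, w (i + N) * ‖g (i + N)‖ ≤ ε := calc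
    ∑' i, w (i + N) * ‖g (i + N)‖ ≤ ∑' i, ε * w (i + N) :=
      ((summable_nat_add_iff N).mpr hwg).tsum_le_tsum
        (fun i => by
          rw [mul_comm]
          exact mul_le_mul_of_nonneg_right (hg_tail _ le_add_self) (hw_nonneg _))
        (((summable_nat_add_iff N).mpr hw_sum.summable).mul_left ε)
    _ = ε * ∑' i, w (i + N) := tsum_mul_left
    _ ≤ ε := mul_le_of_le_one_right hε hw_tail
  calc ‖∑' i, w i • g i‖ ≤ ∑' i, w i * ‖g i‖ := by
        simpa only [norm_smul, Real.norm_of_nonneg (hw_nonneg _)] using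
          norm_tsum_le_tsum_norm (f := fun i => w i • g i)
            (by simpa only [norm_smul, Real.norm_of_nonneg (hw_nonneg _)] using hwg)
    _ = ∑ i ∈ range N, w i * ‖g i‖ + ∑' i, w (i + N) * ‖g (i + N)‖ :=
        (hwg.sum_add_tsum_nat_add N).symm
    _ ≤ ∑ i ∈ range N, w i * ‖g i‖ + ε := by gcongr

theorem tendsto_tsum_smul_of_tendsto [CompleteSpace E] {α : Type*} {F : Filter α}
    {w : α → ℕ → ℝ} (hw_nonneg : ∀ᶠ t in F, ∀ i, 0 ≤ w t i)
    (hw_sum : ∀ᶠ t in F, HasSum (w t) 1) (hw_zero : ∀ i, Tendsto (fun t => w t i) F (𝓝 0))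
    {f : ℕ → E} {L : E} (hf : Tendsto f atTop (𝓝 L)) :
    Tendsto (fun t => ∑' i, w t i • f i) F (𝓝 L) := by
  obtain ⟨M, hM⟩ := isBounded_iff_forall_norm_le.mp
    (Metric.isBounded_range_of_tendsto _ (tendsto_sub_nhds_zero_iff.mpr hf))
  rw [Metric.tendsto_nhds]
  intro ε hε
  obtain ⟨N, hN⟩ := eventually_atTop.mp
    ((tendsto_sub_nhds_zero_iff.mpr hf).eventually (Metric.closedBall_mem_nhds 0 (half_pos hε)))
  have head : Tendsto (fun t => ∑ i ∈ range N, w t i * ‖f i - L‖) F (𝓝 0) := by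
    simpa using tendsto_finsetSum (range N) fun i _ => (hw_zero i).mul_const ‖f i - L‖
  filter_upwards [hw_nonneg, hw_sum, head.eventually (gt_mem_nhds (half_pos hε))]
    with t ht_nonneg ht_sum ht_head
  have hsummable : Summable fun i => w t i • (f i - L) :=
    .of_norm_bounded (ht_sum.summable.mul_right M) fun i => by
      rw [norm_smul, Real.norm_of_nonneg (ht_nonneg i)]
      exact mul_le_mul_of_nonneg_left (hM _ ⟨i, rfl⟩) (ht_nonneg i)
  have hshift : ∑' i, w t i • f i = ∑' i, w t i • (f i - L) + L := by
    simpa only [smul_sub, sub_add_cancel, one_smul] using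
      (hsummable.hasSum.add (ht_sum.smul_const L)).tsum_eq
  rw [dist_eq_norm, hshift, add_sub_cancel_right]
  calc ‖∑' i, w t i • (f i - L)‖ ≤ ∑ i ∈ range N, w t i * ‖f i - L‖ + ε / 2 :=
        norm_tsum_smul_le_sum_range_add ht_nonneg ht_sum (fun i => hM _ ⟨i, rfl⟩)
          fun i hi => mem_closedBall_zero_iff.mp (hN i hi)
    _ < ε / 2 + ε / 2 := by gcongr
    _ = ε := add_halves ε

end Toeplitz

lemma tsum_pow_mul_sub_eq {x : ℝ} {s : ℕ → ℝ} (hs : Summable fun i => x ^ i * s (i + 1)) :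
    ∑' i, x ^ i * (s (i + 1) - s i) = (1 - x) * ∑' i, x ^ i * s (i + 1) - s 0 := by
  have hshift : Summable fun i => x ^ (i + 1) * s (i + 1) := by
    simpa only [pow_succ', mul_assoc] using hs.mul_left x
  have hs' : Summable fun i => x ^ i * s i := (summable_nat_add_iff 1).mp hshift
  simp_rw [mul_sub]
  rw [hs.tsum_sub hs', hs'.tsum_eq_zero_add]
  simp only [pow_zero, one_mul, pow_succ', mul_assoc, tsum_mul_left]
  ring

lemma hasSum_succ_mul_geometric {r : ℝ} (hr : |r| < 1) :
    HasSum (fun i : ℕ => ((i : ℝ) + 1) * r ^ i) (1 / (1 - r) ^ 2) := by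
  simpa using hasSum_choose_mul_geometric_of_norm_lt_one 1 (r := r) hr

noncomputable def cesaroMean (a : ℕ → ℝ) (n : ℕ) : ℝ := 1 / (n : ℝ) * ∑ i ∈ Icc 1 n, a i

lemma sum_Icc_eq_mul_cesaroMean (a : ℕ → ℝ) (n : ℕ) :
    ∑ i ∈ Icc 1 n, a i = n * cesaroMean a n := by
  rcases n.eq_zero_or_pos with rfl | hn
  · simp
  · rw [cesaroMean, ← mul_assoc, mul_one_div_cancel (by positivity), one_mul]

def abelWeight (l : ℝ) (i : ℕ) : ℝ := l ^ 2 * ((i + 1) * (1 - l) ^ i)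

lemma abelWeight_nonneg {l : ℝ} (hl : l ≤ 1) (i : ℕ) : 0 ≤ abelWeight l i :=
  mul_nonneg (sq_nonneg l) (mul_nonneg (by positivity) (pow_nonneg (sub_nonneg.mpr hl) i))

lemma hasSum_abelWeight {l : ℝ} (hl : |1 - l| < 1) : HasSum (abelWeight l) 1 := by
  have hl0 : l ≠ 0 := by rintro rfl; norm_num at hl
  have h := (hasSum_succ_mul_geometric hl).mul_left (l ^ 2)
  rwa [sub_sub_cancel, mul_one_div_cancel (pow_ne_zero 2 hl0)] at h

lemma tendsto_abelWeight_zero (i : ℕ) : Tendsto (fun l => abelWeight l i) (𝓝 0) (𝓝 0) := by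
  have : Continuous fun l => abelWeight l i := by unfold abelWeight; fun_prop
  simpa [abelWeight] using this.tendsto 0

lemma mul_tsum_eq_tsum_abelWeight_mul_cesaroMean {a : ℕ → ℝ} {B : ℝ}
    (hB : ∀ n, |cesaroMean a n| ≤ B) {l : ℝ} (hl : |1 - l| < 1) :
    l * ∑' i, (1 - l) ^ i * a (i + 1) = ∑' i, abelWeight l i * cesaroMean a (i + 1) := by
  set s : ℕ → ℝ := fun n => ∑ i ∈ Icc 1 n, a i
  have ha : ∀ i, a (i + 1) = s (i + 1) - s i := fun i => by
    simp only [s, sum_Icc_succ_top (Nat.le_add_left 1 i)]; ring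
  have hs0 : s 0 = 0 := sum_empty
  have hs : Summable fun i => (1 - l) ^ i * s (i + 1) := by
    have hr : |(|1 - l|)| < 1 := by rwa [abs_abs]
    refine .of_norm_bounded ((hasSum_succ_mul_geometric hr).summable.mul_left B) fun i => ?_
    have hsi : |s (i + 1)| ≤ B * (i + 1) := by
      rw [show s (i + 1) = _ from sum_Icc_eq_mul_cesaroMean a (i + 1), abs_mul, Nat.abs_cast,
        mul_comm]
      push_cast
      exact mul_le_mul_of_nonneg_right (hB _) (by positivity)
    rw [norm_mul, norm_pow, Real.norm_eq_abs, Real.norm_eq_abs, mul_comm, ← mul_assoc]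
    exact mul_le_mul_of_nonneg_right hsi (by positivity)
  calc l * ∑' i, (1 - l) ^ i * a (i + 1)
      = l * ((1 - (1 - l)) * ∑' i, (1 - l) ^ i * s (i + 1) - s 0) := by
        simp_rw [ha, tsum_pow_mul_sub_eq hs]
    _ = ∑' i, l ^ 2 * ((1 - l) ^ i * s (i + 1)) := by
        rw [hs0, tsum_mul_left]; ring
    _ = ∑' i, abelWeight l i * cesaroMean a (i + 1) := by
        congr! 2 with i
        simp only [s, abelWeight, sum_Icc_eq_mul_cesaroMean]; push_cast; ring

theorem hardy_tauberian_sequences_general (a : ℕ → ℝ) (L : ℝ)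
    (hces : Tendsto (fun n : ℕ => (1 / (n : ℝ)) * ∑ i ∈ Finset.Icc 1 n, a i)
      atTop (nhds L)) :
    Tendsto (fun l : ℝ => l * ∑' i : ℕ, (1 - l) ^ i * a (i + 1))
      (nhdsWithin 0 (Set.Ioi 0)) (nhds L) := by
  obtain ⟨B, hB⟩ := isBounded_iff_forall_norm_le.mp (Metric.isBounded_range_of_tendsto _ hces)
  have hσ : Tendsto (fun i => cesaroMean a (i + 1)) atTop (𝓝 L) :=
    hces.comp (tendsto_add_atTop_nat 1)
  have hl : ∀ᶠ l in 𝓝[>] (0 : ℝ), l ∈ Set.Ioo 0 1 := Ioo_mem_nhdsGT one_pos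
  have hl' : ∀ᶠ l in 𝓝[>] (0 : ℝ), |1 - l| < 1 :=
    hl.mono fun l hl => abs_sub_lt_iff.mpr ⟨by linarith [hl.1], by linarith [hl.2]⟩
  have habel := tendsto_tsum_smul_of_tendsto
    (hl.mono fun l hl => abelWeight_nonneg hl.2.le) (hl'.mono fun l => hasSum_abelWeight)
    (fun i => (tendsto_abelWeight_zero i).mono_left nhdsWithin_le_nhds) hσ
  exact habel.congr' (hl'.mono fun l hl =>
    (mul_tsum_eq_tsum_abelWeight_mul_cesaroMean (fun n => hB _ ⟨n, rfl⟩) hl).symm)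

theorem hardy_tauberian_sequences (a : ℕ → ℝ) (C : ℝ) (hC : ∀ i, |a i| ≤ C)
    (L : ℝ)
    (hces : Tendsto (fun n : ℕ => (1 / (n : ℝ)) * ∑ i ∈ Finset.Icc 1 n, a i)
      atTop (nhds L)) :
    Tendsto (fun l : ℝ => l * ∑' i : ℕ, (1 - l) ^ i * a (i + 1))
      (nhdsWithin 0 (Set.Ioi 0)) (nhds L) :=
  hardy_tauberian_sequences_general a L hces
end

section
/- Let g : ℝ≥0 → [0,1] be a bounded continuous function. If lim_{T→∞} (1/T)∫₀^T g(t)dt exists and equals L, then lim_{λ→0+} λ∫₀^∞ e^{-λt} g(t)dt exists and equals L. -/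
/-!
With `G T = ∫₀^T g`, integration by parts gives
`λ ∫₀^∞ e^{-λt} g(t) dt = λ² ∫₀^∞ e^{-λt} G(t) dt`, and the substitution `s = λt` turns this into
`∫₀^∞ s e^{-s} · G(s/λ)/(s/λ) ds`. As `λ → 0⁺` the Cesàro means `G(s/λ)/(s/λ)` tend to `L` for
every `s > 0` and stay bounded by `sup |g|`, so dominated convergence gives the limit
`L · ∫₀^∞ s e^{-s} ds = L`.
-/

open Filter MeasureTheory Set Real Topology

theorem integrableOn_mul_exp_neg_mul {l : ℝ} (hl : 0 < l) :
    IntegrableOn (fun t : ℝ => t * exp (-l * t)) (Ioi 0) := by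
  simpa only [rpow_one] using integrableOn_rpow_mul_exp_neg_mul_rpow (s := 1) (p := 1)
    (by norm_num) one_pos hl

theorem integral_mul_exp_neg_Ioi_zero : ∫ s in Ioi (0 : ℝ), s * exp (-s) = 1 := by
  simpa [show (2 : ℝ) - 1 = 1 by norm_num] using
    integral_rpow_mul_exp_neg_mul_Ioi (a := 2) two_pos one_pos

theorem tendsto_mul_exp_neg_mul_atTop {l : ℝ} (hl : 0 < l) :
    Tendsto (fun t : ℝ => t * exp (-l * t)) atTop (𝓝 0) := by
  simpa only [rpow_one] using tendsto_rpow_mul_exp_neg_mul_atTop_nhds_zero 1 l hl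

theorem abs_intervalIntegral_zero_le_mul {g : ℝ → ℝ} {C T : ℝ}
    (hgC : ∀ t, 0 ≤ t → |g t| ≤ C) (hT : 0 ≤ T) : |∫ t in (0 : ℝ)..T, g t| ≤ C * T := by
  have := intervalIntegral.norm_integral_le_of_norm_le_const (f := g)
    fun t ht => hgC t (by rw [uIoc_of_le hT] at ht; exact ht.1.le)
  rwa [sub_zero, abs_of_nonneg hT] at this

theorem mul_setIntegral_exp_neg_mul_Ioi (f : ℝ → ℝ) {l : ℝ} (hl : 0 < l) :
    l * ∫ t in Ioi 0, exp (-l * t) * f t = ∫ s in Ioi 0, exp (-s) * f (s / l) := by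
  have := integral_comp_mul_left_Ioi (fun t => exp (-l * t) * f t) 0 (inv_pos.mpr hl)
  simp only [mul_zero, inv_inv, smul_eq_mul] at this
  rw [← this]
  refine setIntegral_congr_fun measurableSet_Ioi fun s _ => ?_
  field_simp

theorem setIntegral_exp_neg_mul_eq_mul_setIntegral_primitive {g : ℝ → ℝ} {C l : ℝ}
    (hg : Continuous g) (hgC : ∀ t, 0 ≤ t → |g t| ≤ C) (hl : 0 < l) :
    ∫ t in Ioi 0, exp (-l * t) * g t =
      l * ∫ t in Ioi 0, exp (-l * t) * ∫ u in (0 : ℝ)..t, g u := by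
  set G : ℝ → ℝ := fun t => ∫ u in (0 : ℝ)..t, g u
  set E : ℝ → ℝ := fun t => exp (-l * t)
  have hG : Continuous G := intervalIntegral.continuous_primitive hg.intervalIntegrable 0
  have hGE_le : ∀ t, 0 ≤ t → ‖G t * E t‖ ≤ C * (t * E t) := fun t ht => by
    rw [norm_mul, norm_of_nonneg (exp_pos _).le, ← mul_assoc]
    exact mul_le_mul_of_nonneg_right (abs_intervalIntegral_zero_le_mul hgC ht) (exp_pos _).le
  have hint_GE' : IntegrableOn (G * fun t => -l * E t) (Ioi 0) := by
    refine Integrable.mono' ((integrableOn_mul_exp_neg_mul hl).const_mul (C * l)) (by fun_prop) ?_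
    filter_upwards [ae_restrict_mem measurableSet_Ioi] with t ht
    have := hGE_le t ht.le
    simp only [Pi.mul_apply, norm_mul, norm_neg, norm_of_nonneg hl.le] at this ⊢
    nlinarith
  have hint_gE : IntegrableOn (g * E) (Ioi 0) := by
    refine Integrable.mono' ((exp_neg_integrableOn_Ioi 0 hl).const_mul C) (by fun_prop) ?_
    filter_upwards [ae_restrict_mem measurableSet_Ioi] with t ht
    rw [Pi.mul_apply, norm_mul, norm_of_nonneg (exp_pos _).le]
    exact mul_le_mul_of_nonneg_right (hgC t ht.le) (exp_pos _).le
  have h_zero : Tendsto (G * E) (𝓝[>] 0) (𝓝 0) := by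
    have : Tendsto (G * E) (𝓝 0) (𝓝 (G 0 * E 0)) := (hG.mul (by fun_prop)).tendsto 0
    simpa [G] using this.mono_left nhdsWithin_le_nhds
  have h_infty : Tendsto (G * E) atTop (𝓝 0) := by
    refine squeeze_zero_norm' ?_ <| by
      simpa only [mul_zero] using (tendsto_mul_exp_neg_mul_atTop hl).const_mul C
    filter_upwards [eventually_ge_atTop 0] with t ht
    exact hGE_le t ht
  have parts := integral_Ioi_mul_deriv_eq_deriv_mul (u := G)
    (fun t _ => hg.integral_hasStrictDerivAt 0 t |>.hasDerivAt)
    (fun t _ => by simpa [E, mul_comm] using ((hasDerivAt_id t).const_mul (-l)).exp)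
    hint_GE' hint_gE h_zero h_infty
  have hGE_eq : ∫ t in Ioi 0, G t * (-l * E t) = -l * ∫ t in Ioi 0, E t * G t := by
    rw [← integral_const_mul]; congr 1; ext t; ring
  simp only [hGE_eq, mul_comm (g _)] at parts
  linarith

theorem tendsto_setIntegral_mul_comp_div_nhdsGT_zero {k F : ℝ → ℝ} {C L : ℝ}
    (hk : IntegrableOn k (Ioi 0)) (hF : Measurable F) (hFC : ∀ T, 0 < T → |F T| ≤ C)
    (hFL : Tendsto F atTop (𝓝 L)) :
    Tendsto (fun l => ∫ s in Ioi 0, k s * F (s / l)) (𝓝[>] 0)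
      (𝓝 ((∫ s in Ioi 0, k s) * L)) := by
  rw [← integral_mul_const]
  refine tendsto_integral_filter_of_dominated_convergence (fun s => ‖k s‖ * C)
    (Eventually.of_forall fun l => hk.aestronglyMeasurable.mul
      (hF.comp (measurable_id.div_const l)).aestronglyMeasurable) ?_ (hk.norm.mul_const C) ?_
  · filter_upwards [self_mem_nhdsWithin] with l hl
    filter_upwards [ae_restrict_mem measurableSet_Ioi] with s hs
    rw [norm_mul]
    exact mul_le_mul_of_nonneg_left (hFC _ (div_pos hs hl)) (norm_nonneg _)
  · filter_upwards [ae_restrict_mem measurableSet_Ioi] with s hs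
    have : Tendsto (fun l => s / l) (𝓝[>] 0) atTop := by
      simpa only [div_eq_mul_inv] using tendsto_inv_nhdsGT_zero.const_mul_atTop hs
    exact (hFL.comp this).const_mul (k s)

theorem abelian_direction_functions (g : ℝ → ℝ) (hg : Continuous g)
    (hg01 : ∀ t, 0 ≤ g t ∧ g t ≤ 1) (L : ℝ)
    (hces : Tendsto (fun T : ℝ => (1 / T) * ∫ t in (0:ℝ)..T, g t)
      atTop (nhds L)) :
    Tendsto (fun l : ℝ => l * ∫ t in Set.Ioi (0:ℝ), Real.exp (-l * t) * g t)
      (nhdsWithin 0 (Set.Ioi 0)) (nhds L) := by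
  set G : ℝ → ℝ := fun T => ∫ t in (0 : ℝ)..T, g t
  have hgC : ∀ t, 0 ≤ t → |g t| ≤ 1 := fun t _ =>
    abs_le.mpr ⟨by linarith [hg01 t], (hg01 t).2⟩
  have hF : Measurable fun T : ℝ => (1 / T) * G T :=
    (measurable_const.div measurable_id).mul
      (intervalIntegral.continuous_primitive hg.intervalIntegrable 0).measurable
  have hFC : ∀ T, 0 < T → |(1 / T) * G T| ≤ 1 := fun T hT => by
    rw [abs_mul, abs_of_pos (one_div_pos.mpr hT), one_div_mul_eq_div, div_le_one hT]
    simpa using abs_intervalIntegral_zero_le_mul hgC hT.le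
  have hrescale : ∀ l, 0 < l → l * ∫ t in Ioi 0, exp (-l * t) * g t
      = ∫ s in Ioi 0, s * exp (-s) * ((1 / (s / l)) * G (s / l)) := fun l hl => by
    rw [setIntegral_exp_neg_mul_eq_mul_setIntegral_primitive hg hgC hl,
      mul_setIntegral_exp_neg_mul_Ioi G hl, ← integral_const_mul]
    refine setIntegral_congr_fun measurableSet_Ioi fun s hs => ?_
    field_simp [(mem_Ioi.mp hs).ne']
  have hk : IntegrableOn (fun s : ℝ => s * exp (-s)) (Ioi 0) := by
    simpa using integrableOn_mul_exp_neg_mul one_pos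
  have hlim := tendsto_setIntegral_mul_comp_div_nhdsGT_zero hk hF hFC hces
  rw [integral_mul_exp_neg_Ioi_zero, one_mul] at hlim
  exact hlim.congr' (eventually_nhdsWithin_of_forall fun l hl => (hrescale l hl).symm)
end
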